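/- The critical values of f are distributed on circles of radius (3d−1)·|v_n|^{3d/(3d−1)} centred at the critical values of f': for every critical value z of f there exists a critical value z' of f' with |z − z'| = (3d−1)·|v_n|^{3d/(3d−1)}, and conversely for every critical value z' of f' there exists a critical value z of f with |z − z'| = (3d−1)·|v_n|^{3d/(3d−1)} (the exponent denoting the real power of the nonnegative real number |v_n|). -/

import Mathlib

/-! `f` is the Thom–Sebastiani sum `f' ⊕ g` with `g(x) = x^{3d} − 3d·v_n·x`, so its critical
points are products of critical points of `f'` and of `g`, and its critical values are the sums
`z' + g(x)` with `x^{3d−1} = v_n`. At such an `x` one has `g(x) = (1 − 3d)·v_n·x` and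
`|x| = |v_n|^{1/(3d−1)}`, so `|g(x)| = (3d−1)·|v_n|^{3d/(3d−1)}`; and `x` always exists since
`ℂ` is algebraically closed. -/

open MvPolynomial

/-- The linearly perturbed Brieskorn–Pham polynomial
`f = y³ − 3v₀y + Σ_κ (x_κ^{3d} − 3d·v_κ·x_κ)`, in the variables `y` (variable `0`) and
`x_κ` (variable `κ+1`). -/
noncomputable def hlPoly (n d : ℕ) (v₀ : ℂ) (v : Fin n → ℂ) :
    MvPolynomial (Fin (n + 1)) ℂ :=
  X 0 ^ 3 - C (3 * v₀) * X 0 +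
    ∑ κ : Fin n, (X κ.succ ^ (3 * d) - C (3 * (d : ℂ) * v κ) * X κ.succ)

/-- The set of critical values of the linearly perturbed Brieskorn–Pham polynomial. -/
def hlCritVals (n d : ℕ) (v₀ : ℂ) (v : Fin n → ℂ) : Set ℂ :=
  {z | ∃ w : Fin (n + 1) → ℂ, (∀ j, eval w (pderiv j (hlPoly n d v₀ v)) = 0) ∧
    eval w (hlPoly n d v₀ v) = z}

variable {m d : ℕ} {v₀ : ℂ}

lemma eval_hlPoly {n : ℕ} (v : Fin n → ℂ) (w : Fin (n + 1) → ℂ) :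
    eval w (hlPoly n d v₀ v) =
      w 0 ^ 3 - 3 * v₀ * w 0 + ∑ κ : Fin n, (w κ.succ ^ (3 * d) - 3 * d * v κ * w κ.succ) := by
  simp [hlPoly]

lemma eval_pderiv_zero_hlPoly {n : ℕ} (v : Fin n → ℂ) (w : Fin (n + 1) → ℂ) :
    eval w (pderiv 0 (hlPoly n d v₀ v)) = 3 * w 0 ^ 2 - 3 * v₀ := by
  simp [hlPoly, Fin.succ_ne_zero]

lemma eval_pderiv_succ_hlPoly {n : ℕ} (v : Fin n → ℂ) (w : Fin (n + 1) → ℂ) (i : Fin n) :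
    eval w (pderiv i.succ (hlPoly n d v₀ v)) = 3 * d * w i.succ ^ (3 * d - 1) - 3 * d * v i := by
  simp [hlPoly, Pi.single_apply, Fin.succ_inj, (Fin.succ_ne_zero i).symm]

lemma eval_hlPoly_succ (v : Fin (m + 1) → ℂ) (w : Fin (m + 2) → ℂ) :
    eval w (hlPoly (m + 1) d v₀ v) =
      eval (Fin.init w) (hlPoly m d v₀ fun κ => v κ.castSucc) +
        (w (Fin.last _) ^ (3 * d) - 3 * d * v (Fin.last m) * w (Fin.last _)) := by
  simp only [eval_hlPoly, Fin.sum_univ_castSucc, Fin.init, Fin.succ_castSucc, Fin.castSucc_zero,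
    Fin.succ_last]
  ring

lemma eval_pderiv_castSucc_hlPoly (v : Fin (m + 1) → ℂ) (w : Fin (m + 2) → ℂ) (j : Fin (m + 1)) :
    eval w (pderiv j.castSucc (hlPoly (m + 1) d v₀ v)) =
      eval (Fin.init w) (pderiv j (hlPoly m d v₀ fun κ => v κ.castSucc)) := by
  cases j using Fin.cases with
  | zero => simp only [Fin.castSucc_zero, eval_pderiv_zero_hlPoly, Fin.init]
  | succ κ =>
    rw [← Fin.succ_castSucc, eval_pderiv_succ_hlPoly, eval_pderiv_succ_hlPoly]
    rfl

lemma isCritical_hlPoly_succ_iff (hd : d ≠ 0) (v : Fin (m + 1) → ℂ) (w : Fin (m + 2) → ℂ) :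
    (∀ j, eval w (pderiv j (hlPoly (m + 1) d v₀ v)) = 0) ↔
      (∀ j, eval (Fin.init w) (pderiv j (hlPoly m d v₀ fun κ => v κ.castSucc)) = 0) ∧
        w (Fin.last _) ^ (3 * d - 1) = v (Fin.last m) := by
  have h3d : (3 * d : ℂ) ≠ 0 := by simpa using hd
  rw [Fin.forall_fin_succ', ← Fin.succ_last, eval_pderiv_succ_hlPoly, sub_eq_zero,
    mul_right_inj' h3d]
  simp only [eval_pderiv_castSucc_hlPoly]

lemma mem_hlCritVals_succ_iff (hd : d ≠ 0) (v : Fin (m + 1) → ℂ) (z : ℂ) :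
    z ∈ hlCritVals (m + 1) d v₀ v ↔
      ∃ z' ∈ hlCritVals m d v₀ (fun κ => v κ.castSucc), ∃ x : ℂ,
        x ^ (3 * d - 1) = v (Fin.last m) ∧ z = z' + (x ^ (3 * d) - 3 * d * v (Fin.last m) * x) := by
  constructor
  · rintro ⟨w, hw, rfl⟩
    rw [isCritical_hlPoly_succ_iff hd] at hw
    exact ⟨_, ⟨Fin.init w, hw.1, rfl⟩, _, hw.2, eval_hlPoly_succ v w⟩
  · rintro ⟨z', ⟨w', hw', rfl⟩, x, hx, rfl⟩
    refine ⟨Fin.snoc w' x, ?_, ?_⟩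
    · rw [isCritical_hlPoly_succ_iff hd, Fin.init_snoc, Fin.snoc_last]
      exact ⟨hw', hx⟩
    · rw [eval_hlPoly_succ, Fin.init_snoc, Fin.snoc_last]

lemma norm_pow_sub_mul_of_pow_pred_eq {N : ℕ} (hN : 1 ≤ N) {x a : ℂ} (hx : x ^ (N - 1) = a) :
    ‖x ^ N - N * a * x‖ = ((N : ℝ) - 1) * ‖a‖ ^ ((N : ℝ) / ((N : ℝ) - 1)) := by
  have hpow : x ^ N = a * x := by rw [← hx, ← pow_succ, Nat.sub_add_cancel hN]
  have hN' : (1 : ℝ) ≤ N := by exact_mod_cast hN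
  have hcoef : ‖(1 : ℂ) - N‖ = (N : ℝ) - 1 := by
    rw [← norm_neg, neg_sub, show (N : ℂ) - 1 = ((N - 1 : ℝ) : ℂ) by push_cast; ring,
      Complex.norm_real, Real.norm_of_nonneg (by linarith)]
  have hnorm : ‖a‖ * ‖x‖ = ‖x‖ ^ N := by rw [← norm_mul, ← hpow, norm_pow]
  calc ‖x ^ N - N * a * x‖ = ((N : ℝ) - 1) * ‖x‖ ^ N := by
        rw [hpow, show a * x - N * a * x = (1 - N) * (a * x) by ring, norm_mul, hcoef, norm_mul,
          hnorm]
    _ = ((N : ℝ) - 1) * ‖a‖ ^ ((N : ℝ) / ((N : ℝ) - 1)) := by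
        rcases hN'.eq_or_lt with hN1 | hN1
        · simp [← hN1]
        · rw [← hx, norm_pow, ← Real.rpow_natCast _ (N - 1), ← Real.rpow_mul (norm_nonneg x),
            Nat.cast_sub hN, Nat.cast_one, mul_div_cancel₀ _ (by linarith), Real.rpow_natCast]

/-- the critical values of `f` (in the variables `y, x₁, …, x_n`,
`n = m+1`) are distributed on circles of radius `(3d−1)·|v_n|^{3d/(3d−1)}` centred at
the critical values of `f'` (in the variables `y, x₁, …, x_{n−1}`). -/
theorem hl_critical_values_on_circles (m d : ℕ) (hd : 1 ≤ d)
    (v₀ : ℂ) (v : Fin (m + 1) → ℂ) :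
    (∀ z ∈ hlCritVals (m + 1) d v₀ v,
      ∃ z' ∈ hlCritVals m d v₀ (fun κ : Fin m => v κ.castSucc),
        ‖z - z'‖ =
          (3 * (d : ℝ) - 1) *
            ‖v (Fin.last m)‖ ^ ((3 * (d : ℝ)) / (3 * (d : ℝ) - 1))) ∧
    (∀ z' ∈ hlCritVals m d v₀ (fun κ : Fin m => v κ.castSucc),
      ∃ z ∈ hlCritVals (m + 1) d v₀ v,
        ‖z - z'‖ =
          (3 * (d : ℝ) - 1) *
            ‖v (Fin.last m)‖ ^ ((3 * (d : ℝ)) / (3 * (d : ℝ) - 1))) := by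
  have hd0 : d ≠ 0 := by omega
  have hradius : ∀ x : ℂ, x ^ (3 * d - 1) = v (Fin.last m) →
      ‖x ^ (3 * d) - 3 * d * v (Fin.last m) * x‖ =
        (3 * (d : ℝ) - 1) * ‖v (Fin.last m)‖ ^ ((3 * (d : ℝ)) / (3 * (d : ℝ) - 1)) := by
    intro x hx
    simpa using norm_pow_sub_mul_of_pow_pred_eq (N := 3 * d) (by omega) hx
  constructor
  · intro z hz
    obtain ⟨z', hz', x, hx, rfl⟩ := (mem_hlCritVals_succ_iff hd0 v z).1 hz
    exact ⟨z', hz', by rw [add_sub_cancel_left, hradius x hx]⟩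
  · intro z' hz'
    obtain ⟨x, hx⟩ := IsAlgClosed.exists_pow_nat_eq (v (Fin.last m)) (n := 3 * d - 1) (by omega)
    exact ⟨_, (mem_hlCritVals_succ_iff hd0 v _).2 ⟨z', hz', x, hx, rfl⟩,
      by rw [add_sub_cancel_left, hradius x hx]⟩
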